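/- There exists an absolute constant C > 0 such that for every prime p, every nontrivial Dirichlet character χ modulo p, and every unit a ∈ (ZMod p)ˣ, the diagonal character sum satisfies Σ_{u ∈ ZMod p} |S(a,u)|² = |Σ_{u ∈ ZMod p} Σ_{b ≠ u} Σ_{b′ ≠ u} χ(b) · conj(χ(b′)) · e_p(a · ((u − b)⁻¹ − (u − b′)⁻¹))| ≤ C · p². -/

import Mathlib

/-!
Substituting `b = u - y` writes `S(a, ·)` as the additive convolution `u ↦ ∑_y c(y) χ(u - y)` with
`c(y) = e_p(a / y)` for `y ≠ 0` and `c(0) = 0`. The translates `u ↦ χ(u - y)` have Gram matrix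
`p·I - J`: after an affine change of variables an off-diagonal entry `∑_u χ(u - y) χ̄(u - z)` is
`χ(-1)` times the Jacobi sum `J(χ, χ̄) = -χ(-1)`. Hence
`∑_u |S(a, u)|² = p ∑_y |c(y)|² - |∑_y c(y)|² ≤ p (p - 1)`.
-/

/-- The standard additive character `e_p(x) = exp(2πi·x̃/p)` on `ZMod p`,
where `x̃ ∈ {0, …, p-1}` is the canonical representative of `x`. -/
noncomputable def eZMod (p : ℕ) (x : ZMod p) : ℂ :=
  Complex.exp (2 * Real.pi * Complex.I * (x.val : ℂ) / (p : ℂ))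

/-- The shifted character sum `S(a,u) = Σ_{b ≠ u} χ(b) · e_p(a · (u − b)⁻¹)`. -/
noncomputable def Ssum (p : ℕ) [Fact p.Prime] (χ : DirichletCharacter ℂ p)
    (a : (ZMod p)ˣ) (u : ZMod p) : ℂ :=
  ∑ b ∈ Finset.univ.filter (fun b : ZMod p => b ≠ u),
    χ b * eZMod p ((a : ZMod p) * (u - b)⁻¹)

open Finset ComplexConjugate

section FiniteField

variable {F R : Type*} [Field F] [Fintype F] [CommRing R] [IsDomain R] {χ : MulChar F R}

theorem sum_mulChar_sub_mul_inv_sub_of_ne (hχ : χ ≠ 1) {y z : F} (hyz : y ≠ z) :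
    ∑ u, χ (u - y) * χ⁻¹ (u - z) = -1 := by
  obtain ⟨d, hd, rfl⟩ : ∃ d ≠ 0, z = y - d := ⟨y - z, sub_ne_zero.mpr hyz, by ring⟩
  have hbij : Function.Bijective fun x : F => y - d * x :=
    (Equiv.subLeft y).bijective.comp (mulLeft_bijective₀ d hd)
  calc ∑ u, χ (u - y) * χ⁻¹ (u - (y - d))
      = ∑ x, χ (-d * x) * χ⁻¹ (d * (1 - x)) :=
        (Fintype.sum_bijective _ hbij _ _ fun x => by ring_nf).symm
    _ = ∑ x, χ (-1) * (χ x * χ⁻¹ (1 - x)) := by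
        refine sum_congr rfl fun x _ => ?_
        have hχd : χ d * χ⁻¹ d = 1 := by
          rw [MulChar.inv_apply', ← map_mul, mul_inv_cancel₀ hd, map_one]
        rw [show -d * x = -1 * x * d by ring, show d * (1 - x) = (1 - x) * d by ring,
          map_mul, map_mul, map_mul]
        linear_combination (χ (-1) * χ x * χ⁻¹ (1 - x)) * hχd
    _ = -1 := by
        have h : χ (-1) * χ (-1) = 1 := by rw [← map_mul, neg_one_mul, neg_neg, map_one]
        rw [← mul_sum, ← jacobiSum, jacobiSum_nontrivial_inv hχ]
        linear_combination -h

theorem sum_mulChar_sub_mul_inv_sub (hχ : χ ≠ 1) [DecidableEq F] (y z : F) :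
    ∑ u, χ (u - y) * χ⁻¹ (u - z) = if y = z then (Fintype.card F : R) - 1 else -1 := by
  split_ifs with hyz
  · subst hyz
    have h : ∀ v : F, χ v * χ⁻¹ v = (1 : MulChar F R) v := fun v => by
      rw [← MulChar.mul_apply, mul_inv_cancel]
    simp_rw [h]
    rw [Fintype.sum_equiv (Equiv.subRight y) (fun u => (1 : MulChar F R) (u - y)) _ fun _ => rfl,
      MulChar.sum_one_eq_card_units, Fintype.card_eq_card_units_add_one (α := F)]
    push_cast; ring
  · exact sum_mulChar_sub_mul_inv_sub_of_ne hχ hyz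

end FiniteField

theorem sum_norm_sq_sum_mul_mulChar_sub {F : Type*} [Field F] [Fintype F] {χ : MulChar F ℂ}
    (hχ : χ ≠ 1) (c : F → ℂ) :
    ∑ u, ‖∑ y, c y * χ (u - y)‖ ^ 2 = Fintype.card F * ∑ y, ‖c y‖ ^ 2 - ‖∑ y, c y‖ ^ 2 := by
  classical
  apply Complex.ofReal_injective
  push_cast
  simp_rw [← Complex.mul_conj']
  have hsplit : ∀ y z, c y * conj (c z) * (if y = z then (Fintype.card F : ℂ) - 1 else -1) =
      (if y = z then (Fintype.card F : ℂ) * (c y * conj (c z)) else 0) - c y * conj (c z) :=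
    fun y z => by split_ifs <;> ring
  calc ∑ u, (∑ y, c y * χ (u - y)) * conj (∑ z, c z * χ (u - z))
      = ∑ u, ∑ y, ∑ z, c y * conj (c z) * (χ (u - y) * χ⁻¹ (u - z)) := by
        refine sum_congr rfl fun u _ => ?_
        rw [map_sum, sum_mul_sum]
        refine sum_congr rfl fun y _ => sum_congr rfl fun z _ => ?_
        rw [map_mul, ← MulChar.star_apply', Complex.star_def]
        ring
    _ = ∑ y, ∑ z, c y * conj (c z) * (if y = z then (Fintype.card F : ℂ) - 1 else -1) := by
        rw [sum_comm]
        refine sum_congr rfl fun y _ => ?_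
        rw [sum_comm]
        simp_rw [← mul_sum, sum_mulChar_sub_mul_inv_sub hχ]
    _ = Fintype.card F * ∑ y, c y * conj (c y) - (∑ y, c y) * conj (∑ y, c y) := by
        simp_rw [hsplit, sum_sub_distrib, sum_ite_eq, mem_univ, if_true, map_sum, sum_mul_sum,
          mul_sum]

section AdditiveCharacter

variable {p : ℕ} [NeZero p]

theorem eZMod_eq_stdAddChar (x : ZMod p) : eZMod p x = ZMod.stdAddChar x := by
  rw [ZMod.stdAddChar_apply, ZMod.toCircle_apply]
  rfl

theorem norm_eZMod (x : ZMod p) : ‖eZMod p x‖ = 1 := by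
  rw [eZMod_eq_stdAddChar, ZMod.stdAddChar_apply, Circle.norm_coe]

theorem eZMod_sub (x y : ZMod p) : eZMod p (x - y) = eZMod p x * conj (eZMod p y) := by
  simp only [eZMod_eq_stdAddChar, sub_eq_add_neg, AddChar.map_add_eq_mul,
    AddChar.map_neg_eq_conj]

end AdditiveCharacter

section DiagonalSum

variable {p : ℕ} [Fact p.Prime] (χ : DirichletCharacter ℂ p) (a : (ZMod p)ˣ)

theorem Ssum_eq_sum_mul_apply_sub (u : ZMod p) :
    Ssum p χ a u = ∑ y, (if y = 0 then 0 else eZMod p (a * y⁻¹)) * χ (u - y) := by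
  rw [Ssum, sum_filter, ← (Equiv.subLeft u).sum_comp]
  refine sum_congr rfl fun y _ => ?_
  simp only [Equiv.subLeft_apply, sub_sub_cancel, ne_eq, sub_eq_self]
  split_ifs <;> ring

theorem sum_norm_sq_Ssum_eq_norm_sum :
    ∑ u, ‖Ssum p χ a u‖ ^ 2 =
      ‖∑ u : ZMod p, ∑ b ∈ univ.filter (· ≠ u), ∑ b' ∈ univ.filter (· ≠ u),
        χ b * conj (χ b') * eZMod p (a * ((u - b)⁻¹ - (u - b')⁻¹))‖ := by
  have hu : ∀ u, ∑ b ∈ univ.filter (· ≠ u), ∑ b' ∈ univ.filter (· ≠ u),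
      χ b * conj (χ b') * eZMod p (a * ((u - b)⁻¹ - (u - b')⁻¹)) =
        ((‖Ssum p χ a u‖ ^ 2 : ℝ) : ℂ) := fun u => by
    rw [Complex.ofReal_pow, ← Complex.mul_conj', Ssum, map_sum, sum_mul_sum]
    refine sum_congr rfl fun b _ => sum_congr rfl fun b' _ => ?_
    rw [map_mul, mul_sub, eZMod_sub]
    ring
  simp_rw [hu]
  rw [← Complex.ofReal_sum, Complex.norm_real, Real.norm_of_nonneg (by positivity)]

theorem sum_norm_sq_Ssum_le (hχ : χ ≠ 1) : ∑ u, ‖Ssum p χ a u‖ ^ 2 ≤ (p : ℝ) ^ 2 := by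
  simp_rw [Ssum_eq_sum_mul_apply_sub]
  rw [sum_norm_sq_sum_mul_mulChar_sub hχ, ZMod.card]
  have hweight : ∑ y : ZMod p, ‖if y = 0 then 0 else eZMod p (a * y⁻¹)‖ ^ 2 ≤ p := by
    calc _ ≤ ∑ _y : ZMod p, (1 : ℝ) := sum_le_sum fun y _ => by split_ifs <;> simp [norm_eZMod]
      _ = p := by simp
  nlinarith [sq_nonneg ‖∑ y : ZMod p, if y = 0 then 0 else eZMod p (a * y⁻¹)‖]

end DiagonalSum

/-- The diagonal bound `𝓒₁ ≪ p²`: there is an absolute constant `C > 0` such that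
for every prime `p`, nontrivial `χ` mod `p`, and unit `a`,
`Σ_u |S(a,u)|² = |Σ_u Σ_{b ≠ u} Σ_{b′ ≠ u} χ(b) conj(χ(b′)) e_p(a((u−b)⁻¹ − (u−b′)⁻¹))|
  ≤ C · p²`. -/
theorem stmt_2 :
    ∃ C : ℝ, 0 < C ∧ ∀ (p : ℕ) (_ : Fact p.Prime)
      (χ : DirichletCharacter ℂ p), χ ≠ 1 → ∀ (a : (ZMod p)ˣ),
      (∑ u : ZMod p, ‖Ssum p χ a u‖ ^ 2 =
        ‖∑ u : ZMod p, ∑ b ∈ Finset.univ.filter (fun b : ZMod p => b ≠ u),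
            ∑ b' ∈ Finset.univ.filter (fun b' : ZMod p => b' ≠ u),
              χ b * (starRingEnd ℂ) (χ b') *
                eZMod p ((a : ZMod p) * ((u - b)⁻¹ - (u - b')⁻¹))‖) ∧
      ∑ u : ZMod p, ‖Ssum p χ a u‖ ^ 2 ≤ C * (p : ℝ) ^ 2 :=
  ⟨1, one_pos, fun p _ χ hχ a =>
    ⟨sum_norm_sq_Ssum_eq_norm_sum χ a, by simpa using sum_norm_sq_Ssum_le χ a hχ⟩⟩
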